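/- arXiv:1808.02385 — 2 statements merged into one kernel-verified Lean document; each statement's English description precedes it below -/
import Mathlib

section
/- Let τ1, τ2, τ3 ∈ ℂ be non-collinear and let M > 0. Then there exists a constant C > 0 (depending only on τ1, τ2, τ3 and M) such that: for all a, b ∈ ℂ with |a| ≤ M and |b| ≤ M, all w ∈ ℂ with |w| = 1, and all ε ≥ 0, if | |a + τ_j w| − |b + τ_j w| | ≤ ε for j = 1, 2, 3, then |a − b| ≤ C ε. (Lipschitz stability of phase retrieval for far field data: with a = u∞_S(x̂,k), b the retrieved value, and w = e^{−ik⟨x̂,z0⟩}, noisy phaseless far field data of level ε yield phased far field data accurate to level Cε, uniformly in x̂ and k.) -/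
/-!
Since `‖a + τ w‖ = ‖a w̄ + τ‖` for `‖w‖ = 1`, it suffices to treat `w = 1`. By polarization,
`(‖a + τⱼ‖² - ‖b + τⱼ‖²) - (‖a + τ₁‖² - ‖b + τ₁‖²) = 2 ⟪τⱼ - τ₁, a - b⟫_ℝ`, and each bracket is
at most `2 (M + ‖τⱼ‖) ε` because `‖a + τ‖ + ‖b + τ‖` is bounded. As `τ₂ - τ₁` and `τ₃ - τ₁` span
`ℂ` over `ℝ`, the injective linear map `z ↦ (⟪τⱼ - τ₁, z⟫_ℝ)ⱼ` is anti-Lipschitz, so `‖a - b‖`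
is controlled by these two inner products.
-/

open Set
open scoped ComplexConjugate

theorem eq_zero_of_inner_eq_zero_of_span_eq_top {𝕜 E ι : Type*} [RCLike 𝕜]
    [NormedAddCommGroup E] [InnerProductSpace 𝕜 E] {v : ι → E}
    (hv : Submodule.span 𝕜 (range v) = ⊤) {z : E} (hz : ∀ i, inner 𝕜 (v i) z = 0) : z = 0 := by
  have hspan : Submodule.span 𝕜 (range v) ≤ (𝕜 ∙ z)ᗮ := Submodule.span_le.2 <| by
    rintro _ ⟨i, rfl⟩
    exact Submodule.mem_orthogonal_singleton_iff_inner_left.2 (hz i)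
  have hz' : z ∈ (𝕜 ∙ z)ᗮ := hspan (hv ▸ Submodule.mem_top)
  exact inner_self_eq_zero.1 (Submodule.mem_orthogonal_singleton_iff_inner_left.1 hz')

theorem exists_norm_le_mul_norm_inner_of_span_eq_top {𝕜 E ι : Type*} [RCLike 𝕜]
    [NormedAddCommGroup E] [InnerProductSpace 𝕜 E] [FiniteDimensional 𝕜 E] [Fintype ι]
    {v : ι → E} (hv : Submodule.span 𝕜 (range v) = ⊤) :
    ∃ K > 0, ∀ z : E, ‖z‖ ≤ K * ‖fun i => inner 𝕜 (v i) z‖ := by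
  let f : E →ₗ[𝕜] ι → 𝕜 := LinearMap.pi fun i => innerₛₗ 𝕜 (v i)
  have hker : LinearMap.ker f = ⊥ := LinearMap.ker_eq_bot'.2 fun z hz =>
    eq_zero_of_inner_eq_zero_of_span_eq_top hv fun i => congrFun hz i
  obtain ⟨K, hK, hf⟩ := f.exists_antilipschitzWith hker
  exact ⟨K, hK, ZeroHomClass.bound_of_antilipschitz f hf⟩

theorem sq_norm_add_sub_sq_norm_add_sub {E : Type*} [NormedAddCommGroup E]
    [InnerProductSpace ℝ E] (a b u u' : E) :
    (‖a + u‖ ^ 2 - ‖b + u‖ ^ 2) - (‖a + u'‖ ^ 2 - ‖b + u'‖ ^ 2) =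
      2 * inner ℝ (u - u') (a - b) := by
  simp only [norm_add_sq_real, inner_sub_right, real_inner_comm a, real_inner_comm b]
  ring

theorem abs_sq_norm_add_sub_sq_norm_add_le {E : Type*} [SeminormedAddCommGroup E]
    {a b u : E} {M R ε : ℝ} (ha : ‖a‖ ≤ M) (hb : ‖b‖ ≤ M) (hu : ‖u‖ ≤ R)
    (h : |‖a + u‖ - ‖b + u‖| ≤ ε) :
    |‖a + u‖ ^ 2 - ‖b + u‖ ^ 2| ≤ 2 * (M + R) * ε := by
  have hsum : ‖a + u‖ + ‖b + u‖ ≤ 2 * (M + R) := by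
    linarith [norm_add_le a u, norm_add_le b u]
  rw [sq_sub_sq, abs_mul, abs_of_nonneg (by positivity)]
  exact mul_le_mul hsum h (abs_nonneg _) ((by positivity : (0 : ℝ) ≤ _).trans hsum)

theorem exists_norm_sub_le_mul_of_abs_norm_add_sub_norm_add_le {E ι : Type*}
    [NormedAddCommGroup E] [InnerProductSpace ℝ E] [FiniteDimensional ℝ E] [Fintype ι]
    (τ₀ : E) (τ : ι → E) (hτ : Submodule.span ℝ (range fun i => τ i - τ₀) = ⊤)
    {M : ℝ} (hM : 0 < M) :
    ∃ C > 0, ∀ a b : E, ‖a‖ ≤ M → ‖b‖ ≤ M → ∀ ε : ℝ,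
      |‖a + τ₀‖ - ‖b + τ₀‖| ≤ ε → (∀ i, |‖a + τ i‖ - ‖b + τ i‖| ≤ ε) →
      ‖a - b‖ ≤ C * ε := by
  obtain ⟨K, hK, hbound⟩ := exists_norm_le_mul_norm_inner_of_span_eq_top hτ
  set R := ‖τ₀‖ + ∑ i, ‖τ i‖
  have hτ₀R : ‖τ₀‖ ≤ R := le_add_of_nonneg_right (by positivity)
  have hτR (i : ι) : ‖τ i‖ ≤ R :=
    (Finset.single_le_sum (fun j _ => norm_nonneg (τ j)) (Finset.mem_univ i)).trans
      (le_add_of_nonneg_left (norm_nonneg _))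
  refine ⟨K * (2 * (M + R)), by positivity, fun a b ha hb ε h₀ h => ?_⟩
  have hε : 0 ≤ ε := (abs_nonneg _).trans h₀
  have hinner (i : ι) : |inner ℝ (τ i - τ₀) (a - b)| ≤ 2 * (M + R) * ε := by
    have := (abs_sub _ _).trans (add_le_add
      (abs_sq_norm_add_sub_sq_norm_add_le ha hb (hτR i) (h i))
      (abs_sq_norm_add_sub_sq_norm_add_le ha hb hτ₀R h₀))
    rw [sq_norm_add_sub_sq_norm_add_sub, abs_mul, abs_two] at this
    linarith
  calc ‖a - b‖ ≤ K * ‖fun i => inner ℝ (τ i - τ₀) (a - b)‖ := hbound _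
    _ ≤ K * (2 * (M + R) * ε) := by
      gcongr
      exact (pi_norm_le_iff_of_nonneg (by positivity)).2 hinner
    _ = K * (2 * (M + R)) * ε := by ring

theorem Complex.norm_add_mul_eq_norm_mul_conj_add {w : ℂ} (hw : ‖w‖ = 1) (a τ : ℂ) :
    ‖a + τ * w‖ = ‖a * conj w + τ‖ := by
  have hw' : w * conj w = 1 := by
    rw [Complex.mul_conj, Complex.normSq_eq_norm_sq, hw]
    norm_num
  rw [← mul_one ‖a + τ * w‖, ← hw, ← Complex.norm_conj w, ← norm_mul, add_mul, mul_assoc, hw',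
    mul_one]

/-- Lipschitz stability of phase retrieval for far field data: with
non-collinear scattering strengths `τ₁, τ₂, τ₃`, noisy phaseless data of
level `ε` determine the phased value up to `C·ε`, uniformly over all
unimodular factors `w`. -/
theorem phase_retrieval_farfield_stability
    (τ₁ τ₂ τ₃ : ℂ) (hnc : LinearIndependent ℝ ![τ₂ - τ₁, τ₃ - τ₁])
    (M : ℝ) (hM : 0 < M) :
    ∃ C > 0, ∀ a b : ℂ, ‖a‖ ≤ M → ‖b‖ ≤ M →
      ∀ w : ℂ, ‖w‖ = 1 → ∀ ε : ℝ, 0 ≤ ε →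
      (|‖a + τ₁ * w‖ - ‖b + τ₁ * w‖| ≤ ε) →
      (|‖a + τ₂ * w‖ - ‖b + τ₂ * w‖| ≤ ε) →
      (|‖a + τ₃ * w‖ - ‖b + τ₃ * w‖| ≤ ε) →
      ‖a - b‖ ≤ C * ε := by
  have hspan : Submodule.span ℝ (range fun i => ![τ₂, τ₃] i - τ₁) = ⊤ := by
    have hdiff : (fun i => ![τ₂, τ₃] i - τ₁) = ![τ₂ - τ₁, τ₃ - τ₁] := by
      ext i
      fin_cases i <;> rfl
    rw [hdiff]
    exact hnc.span_eq_top_of_card_eq_finrank (by simp)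
  obtain ⟨C, hC, hstable⟩ :=
    exists_norm_sub_le_mul_of_abs_norm_add_sub_norm_add_le τ₁ ![τ₂, τ₃] hspan hM
  refine ⟨C, hC, fun a b ha hb w hw ε _ h₁ h₂ h₃ => ?_⟩
  simp only [Complex.norm_add_mul_eq_norm_mul_conj_add hw] at h₁ h₂ h₃
  have hab := hstable (a * conj w) (b * conj w) (by simpa [hw]) (by simpa [hw]) ε h₁
    (Fin.forall_fin_two.2 ⟨h₂, h₃⟩)
  rwa [← sub_mul, norm_mul, Complex.norm_conj, hw, mul_one] at hab
end

section
/- Let 0 < k_min < k_max, let f1, f2 : ℝ² → ℂ be integrable with compact support, and let g : ℝ → ℝ be a real-valued continuous function on (k_min, k_max) with g(k) ≠ 0 for all k in some nonempty open subinterval (k_a, k_b) ⊆ (k_min, k_max). Assume that for j = 1, 2, Im f_j(y) ≥ 0 for almost every y ∈ ℝ² and Im f_j > 0 on a set of positive Lebesgue measure. Let τ1 ∈ ℝ \ {0} and z0 ∈ ℝ². If | g(k) u∞_{f1}(x̂, k) + τ e^{−ik⟨x̂, z0⟩} | = | g(k) u∞_{f2}(x̂, k) + τ e^{−ik⟨x̂,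 z0⟩} | for all unit vectors x̂ ∈ ℝ², all k ∈ (k_min, k_max), and all τ ∈ {0, τ1}, then f1 = f2 almost everywhere. (Uniqueness for the phaseless inverse source problem in ℝ² with a single reference point source, under the sign condition on the imaginary part of the source.) -/
/-!
Fix a direction `x̂`, put `φ = ⟨x̂, z₀⟩` and `A_j(k) = e^{ikφ} u∞_{f_j}(x̂, k)`. Because `f_j` has
compact support, `A_j` is the restriction of an entire function of `k`. The data with `τ = 0`
give `|A₁| = |A₂|` on `(k_a, k_b)`, and then the data with `τ = τ₁ ≠ 0` give `Re A₁ = Re A₂`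
there. With `A*(z) = conj (A (conj z))`, these identities say that the entire functions
`A₁ + A₁*, A₂ + A₂*` and `A₁ A₁*, A₂ A₂*` agree on an interval of the real axis, so they hold for
every real `k`. Hence `Im A₁ = ± Im A₂` on `ℝ`. Since `Im A_j(0) = Im ∫ f_j > 0`, the sign is `+`
near `k = 0`, so `A₁ = A₂` near `0` and therefore everywhere. Thus `f₁` and `f₂` have the same
Fourier transform, and they agree almost everywhere.
-/

open MeasureTheory
open scoped RealInnerProductSpace

/-- The far field pattern of the source with spatial part `f`:
`u∞_f(x̂, k) = ∫ e^{-ik⟨x̂,y⟩} f(y) dy`. -/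
noncomputable def farField {n : ℕ} (f : EuclideanSpace ℝ (Fin n) → ℂ)
    (xhat : EuclideanSpace ℝ (Fin n)) (k : ℝ) : ℂ :=
  ∫ y, Complex.exp (-(Complex.I * (k : ℂ) * ((⟪xhat, y⟫ : ℝ) : ℂ))) * f y

open Complex Filter Set Topology
open scoped ComplexConjugate FourierTransform ContDiff

lemma Complex.eq_of_re_eq_of_norm_eq {z w : ℂ} (hre : z.re = w.re) (hnorm : ‖z‖ = ‖w‖)
    (hz : 0 ≤ z.im) (hw : 0 ≤ w.im) : z = w := by
  have hsq : z.im ^ 2 = w.im ^ 2 := by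
    rw [← Complex.sq_norm_sub_sq_re, ← Complex.sq_norm_sub_sq_re, hnorm, hre]
  exact Complex.ext hre ((sq_eq_sq₀ hz hw).1 hsq)

lemma Complex.re_mul_conj_eq_of_norm_add_eq {z w v : ℂ} (h₀ : ‖z‖ = ‖w‖)
    (h₁ : ‖z + v‖ = ‖w + v‖) : (z * conj v).re = (w * conj v).re := by
  have h₀' : normSq z = normSq w := by simp only [← Complex.sq_norm, h₀]
  have h₁' : normSq (z + v) = normSq (w + v) := by simp only [← Complex.sq_norm, h₁]
  rw [normSq_add, normSq_add, h₀'] at h₁'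
  linarith

lemma Complex.norm_eq_and_re_mul_conj_eq_of_norm_add_eq {γ τ : ℝ} (hγ : γ ≠ 0) (hτ : τ ≠ 0)
    {F₁ F₂ e : ℂ} (h₀ : ‖(γ : ℂ) * F₁‖ = ‖(γ : ℂ) * F₂‖)
    (h₁ : ‖(γ : ℂ) * F₁ + τ * e‖ = ‖(γ : ℂ) * F₂ + τ * e‖) :
    ‖F₁‖ = ‖F₂‖ ∧ (F₁ * conj e).re = (F₂ * conj e).re := by
  refine ⟨by simpa [norm_mul, hγ] using h₀, ?_⟩
  have hre := Complex.re_mul_conj_eq_of_norm_add_eq h₀ h₁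
  have hscale : ∀ F : ℂ, (γ : ℂ) * F * conj (τ * e) = ((γ * τ : ℝ) : ℂ) * (F * conj e) := by
    intro F; simp only [map_mul, conj_ofReal]; push_cast; ring
  rw [hscale, hscale, re_ofReal_mul, re_ofReal_mul] at hre
  exact mul_left_cancel₀ (mul_ne_zero hγ hτ) hre

lemma MeasureTheory.integral_im_pos {α : Type*} [MeasurableSpace α] {μ : Measure α} {f : α → ℂ}
    (hf : Integrable f μ) (him : ∀ᵐ y ∂μ, 0 ≤ (f y).im) (hpos : 0 < μ {y | 0 < (f y).im}) :
    0 < (∫ y, f y ∂μ).im := by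
  have him_int : (∫ y, f y ∂μ).im = ∫ y, (f y).im ∂μ := (integral_im hf).symm
  rw [him_int, integral_pos_iff_support_of_nonneg_ae him hf.im]
  exact hpos.trans_le (measure_mono fun y hy ↦ ne_of_gt hy)

section EntireFunctions

variable {A₁ A₂ : ℂ → ℂ} {a b : ℝ}

theorem Differentiable.eq_of_eqOn_real_Ioo {F G : ℂ → ℂ} (hF : Differentiable ℂ F)
    (hG : Differentiable ℂ G) (hab : a < b) (h : ∀ k ∈ Ioo a b, F k = G k) :
    F = G := by
  obtain ⟨c, hc⟩ := nonempty_Ioo.2 hab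
  have hreal : Tendsto ((↑) : ℝ → ℂ) (𝓝[≠] c) (𝓝[≠] (c : ℂ)) :=
    continuous_ofReal.continuousWithinAt.tendsto_nhdsWithin fun _ _ ↦ by simp_all
  have hfreq : ∃ᶠ z in 𝓝[≠] (c : ℂ), F z = G z :=
    hreal.frequently (eventually_nhdsWithin_of_eventually_nhds
      (eventually_of_mem (Ioo_mem_nhds hc.1 hc.2) h)).frequently
  funext z
  exact AnalyticOnNhd.eqOn_of_preconnected_of_frequently_eq (fun w _ ↦ hF.analyticAt w)
    (fun w _ ↦ hG.analyticAt w) isPreconnected_univ (mem_univ _) hfreq (mem_univ z)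

lemma Differentiable.conj_comp_conj {A : ℂ → ℂ} (hA : Differentiable ℂ A) :
    Differentiable ℂ (conj ∘ A ∘ conj) :=
  fun _ ↦ differentiableAt_conj_conj_iff.2 (hA _)

theorem Differentiable.forall_re_eq_of_re_eq_on_Ioo (hA₁ : Differentiable ℂ A₁)
    (hA₂ : Differentiable ℂ A₂) (hab : a < b) (h : ∀ k ∈ Ioo a b, (A₁ k).re = (A₂ k).re)
    (k : ℝ) : (A₁ k).re = (A₂ k).re := by
  have key := (hA₁.add hA₁.conj_comp_conj).eq_of_eqOn_real_Ioo (hA₂.add hA₂.conj_comp_conj) hab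
    fun k hk ↦ by simp [add_conj, h k hk]
  simpa [add_conj] using congrFun key k

theorem Differentiable.forall_norm_eq_of_norm_eq_on_Ioo (hA₁ : Differentiable ℂ A₁)
    (hA₂ : Differentiable ℂ A₂) (hab : a < b) (h : ∀ k ∈ Ioo a b, ‖A₁ k‖ = ‖A₂ k‖)
    (k : ℝ) : ‖A₁ k‖ = ‖A₂ k‖ := by
  have key := (hA₁.mul hA₁.conj_comp_conj).eq_of_eqOn_real_Ioo (hA₂.mul hA₂.conj_comp_conj) hab
    fun k hk ↦ by simp [mul_conj, normSq_eq_norm_sq, h k hk]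
  have hk := congrFun key k
  simp only [Pi.mul_apply, Function.comp_apply, conj_ofReal, mul_conj, normSq_eq_norm_sq] at hk
  exact (sq_eq_sq₀ (norm_nonneg _) (norm_nonneg _)).1 (mod_cast hk)

theorem Differentiable.eq_of_re_eq_of_norm_eq_on_Ioo (hA₁ : Differentiable ℂ A₁)
    (hA₂ : Differentiable ℂ A₂) (hab : a < b)
    (hre : ∀ k ∈ Ioo a b, (A₁ k).re = (A₂ k).re) (hnorm : ∀ k ∈ Ioo a b, ‖A₁ k‖ = ‖A₂ k‖)
    (him₁ : 0 < (A₁ 0).im) (him₂ : 0 < (A₂ 0).im) : A₁ = A₂ := by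
  have him_pos : ∀ A : ℂ → ℂ, Differentiable ℂ A → 0 < (A 0).im → ∀ᶠ k : ℝ in 𝓝 0, 0 < (A k).im :=
    fun A hA him ↦ Tendsto.eventually_const_lt (by simpa using him)
      ((continuous_im.comp (hA.continuous.comp continuous_ofReal)).tendsto 0)
  obtain ⟨l, u, ⟨hl, hu⟩, hlu⟩ :=
    mem_nhds_iff_exists_Ioo_subset.1 ((him_pos A₁ hA₁ him₁).and (him_pos A₂ hA₂ him₂))
  refine hA₁.eq_of_eqOn_real_Ioo hA₂ (hl.trans hu) fun k hk ↦ ?_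
  exact Complex.eq_of_re_eq_of_norm_eq (hA₁.forall_re_eq_of_re_eq_on_Ioo hA₂ hab hre k)
    (hA₁.forall_norm_eq_of_norm_eq_on_Ioo hA₂ hab hnorm k) (hlu hk).1.le (hlu hk).2.le

end EntireFunctions

section Holomorphy

variable {α : Type*} [TopologicalSpace α] [MeasurableSpace α] [OpensMeasurableSpace α]
  {μ : Measure α}

lemma norm_cexp_mul_ofReal_le {z : ℂ} {t R M : ℝ} (hz : ‖z‖ ≤ R) (ht : |t| ≤ M) :
    ‖cexp (z * t)‖ ≤ Real.exp (R * M) := by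
  refine (norm_exp_le_exp_norm _).trans (Real.exp_le_exp.2 ?_)
  rw [norm_mul, norm_real, Real.norm_eq_abs]
  exact mul_le_mul hz ht (abs_nonneg _) ((norm_nonneg _).trans hz)

theorem differentiable_integral_cexp_mul {f : α → ℂ} {r : α → ℝ} (hf : Integrable f μ)
    (hcs : HasCompactSupport f) (hr : Continuous r) :
    Differentiable ℂ fun z : ℂ ↦ ∫ y, cexp (z * r y) * f y ∂μ := by
  intro z₀
  obtain ⟨M, hM⟩ := hcs.exists_bound_of_continuousOn hr.continuousOn
  have hrM : ∀ y, f y ≠ 0 → |r y| ≤ M := fun y hy ↦ hM y (subset_tsupport f hy)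
  have hmeas : ∀ z : ℂ, AEStronglyMeasurable (fun y ↦ cexp (z * r y)) μ := fun z ↦
    (continuous_exp.comp (continuous_const.mul (continuous_ofReal.comp hr))).aestronglyMeasurable
  have hint : Integrable (fun y ↦ cexp (z₀ * r y) * f y) μ := by
    refine (hf.norm.const_mul (Real.exp (‖z₀‖ * M))).mono' ((hmeas z₀).mul hf.1)
      (.of_forall fun y ↦ ?_)
    rcases eq_or_ne (f y) 0 with hy | hy
    · simp [hy]
    · rw [norm_mul]
      exact mul_le_mul_of_nonneg_right (norm_cexp_mul_ofReal_le le_rfl (hrM y hy)) (norm_nonneg _)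
  have hderiv_bound : ∀ y, ∀ z ∈ Metric.ball z₀ 1,
      ‖r y * cexp (z * r y) * f y‖ ≤ M * Real.exp ((‖z₀‖ + 1) * M) * ‖f y‖ := by
    intro y z hz
    rcases eq_or_ne (f y) 0 with hy | hy
    · simp [hy]
    have hz' : ‖z‖ ≤ ‖z₀‖ + 1 := by
      have := norm_le_norm_add_norm_sub' z z₀
      rw [← dist_eq_norm] at this
      linarith [Metric.mem_ball.1 hz]
    rw [norm_mul, norm_mul, norm_real, Real.norm_eq_abs]
    gcongr
    · exact (abs_nonneg _).trans (hrM y hy)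
    · exact hrM y hy
    · exact norm_cexp_mul_ofReal_le hz' (hrM y hy)
  have hderiv : ∀ y, ∀ z : ℂ, HasDerivAt (fun z ↦ cexp (z * r y) * f y)
      (r y * cexp (z * r y) * f y) z := fun y z ↦ by
    simpa [mul_comm] using (((hasDerivAt_id z).mul_const (r y : ℂ)).cexp).mul_const (f y)
  exact (hasDerivAt_integral_of_dominated_loc_of_deriv_le (Metric.ball_mem_nhds z₀ one_pos)
    (.of_forall fun z ↦ (hmeas z).mul hf.1) hint
    (((continuous_ofReal.comp hr).aestronglyMeasurable.mul (hmeas z₀)).mul hf.1)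
    (.of_forall hderiv_bound) (hf.norm.const_mul _)
    (.of_forall fun y z _ ↦ hderiv y z)).2.differentiableAt

end Holomorphy

section Fourier

variable {V : Type*} [NormedAddCommGroup V] [InnerProductSpace ℝ V]
  [MeasurableSpace V] [BorelSpace V] [FiniteDimensional ℝ V]

theorem MeasureTheory.Integrable.ae_eq_of_fourier_eq {f₁ f₂ : V → ℂ} (hf₁ : Integrable f₁)
    (hf₂ : Integrable f₂) (h : 𝓕 f₁ = 𝓕 f₂) : f₁ =ᵐ[volume] f₂ := by
  refine ae_eq_of_integral_contDiff_smul_eq hf₁.locallyIntegrable hf₂.locallyIntegrable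
    fun φ hφ hφc ↦ ?_
  let ψ : SchwartzMap V ℂ :=
    𝓕⁻ ((hφc.comp_left ofReal_zero).toSchwartzMap (ofRealCLM.contDiff.comp hφ))
  have hψ : 𝓕 (ψ : V → ℂ) = fun x ↦ (φ x : ℂ) := by
    rw [← SchwartzMap.fourier_coe]
    simp only [ψ, FourierTransform.fourier_fourierInv_eq]
    rfl
  have hflip : (innerₗ V).flip = innerₗ V := by ext; exact real_inner_comm _ _
  have hdual : ∀ f : V → ℂ, Integrable f → ∫ x, φ x • f x = ∫ ξ, 𝓕 f ξ • ψ ξ := by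
    intro f hf
    have := VectorFourier.integral_fourierIntegral_smul_eq_flip (L := innerₗ V)
      (μ := volume) (ν := volume) Real.continuous_fourierChar continuous_inner hf ψ.integrable
    rw [hflip] at this
    change ∫ ξ, 𝓕 f ξ • ψ ξ = ∫ x, f x • 𝓕 (ψ : V → ℂ) x at this
    rw [this, hψ]
    congr 1 with x
    simp [mul_comm]
  rw [hdual f₁ hf₁, hdual f₂ hf₂, h]

end Fourier

section FarField

variable {n : ℕ}

noncomputable def complexFarField (f : EuclideanSpace ℝ (Fin n) → ℂ)
    (xhat : EuclideanSpace ℝ (Fin n)) (z : ℂ) : ℂ :=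
  ∫ y, cexp (-(I * z * ((⟪xhat, y⟫ : ℝ) : ℂ))) * f y

lemma complexFarField_ofReal (f : EuclideanSpace ℝ (Fin n) → ℂ)
    (xhat : EuclideanSpace ℝ (Fin n)) (k : ℝ) : complexFarField f xhat k = farField f xhat k :=
  rfl

lemma complexFarField_zero (f : EuclideanSpace ℝ (Fin n) → ℂ)
    (xhat : EuclideanSpace ℝ (Fin n)) : complexFarField f xhat 0 = ∫ y, f y := by
  simp [complexFarField]

theorem differentiable_complexFarField {f : EuclideanSpace ℝ (Fin n) → ℂ} (hf : Integrable f)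
    (hcs : HasCompactSupport f) (xhat : EuclideanSpace ℝ (Fin n)) :
    Differentiable ℂ (complexFarField f xhat) := by
  have hcomp : complexFarField f xhat =
      (fun w : ℂ ↦ ∫ y, cexp (w * ⟪xhat, y⟫) * f y) ∘ fun z ↦ -I * z := by
    funext z
    simp only [complexFarField, Function.comp_apply, neg_mul]
  rw [hcomp]
  exact (differentiable_integral_cexp_mul hf hcs (continuous_const.inner continuous_id)).comp
    (differentiable_id.const_mul _)

lemma farField_eq_fourier (f : EuclideanSpace ℝ (Fin n) → ℂ) (xhat : EuclideanSpace ℝ (Fin n))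
    (k : ℝ) : farField f xhat k = 𝓕 f ((k / (2 * Real.pi)) • xhat) := by
  rw [Real.fourier_eq', farField]
  congr 1 with y
  rw [smul_eq_mul, inner_smul_right, real_inner_comm]
  congr 2
  push_cast
  field_simp

theorem fourier_eq_of_farField_eq [NeZero n] {f₁ f₂ : EuclideanSpace ℝ (Fin n) → ℂ}
    (h : ∀ xhat : EuclideanSpace ℝ (Fin n), ‖xhat‖ = 1 → farField f₁ xhat = farField f₂ xhat) :
    𝓕 f₁ = 𝓕 f₂ := by
  funext w
  obtain ⟨xhat, hxhat, hw⟩ : ∃ xhat : EuclideanSpace ℝ (Fin n), ‖xhat‖ = 1 ∧ w = ‖w‖ • xhat := by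
    rcases eq_or_ne w 0 with rfl | hw
    · obtain ⟨xhat, hxhat⟩ := exists_norm_eq (EuclideanSpace ℝ (Fin n)) zero_le_one
      exact ⟨xhat, hxhat, by simp⟩
    · refine ⟨‖w‖⁻¹ • w, norm_smul_inv_norm hw, ?_⟩
      rw [smul_smul, mul_inv_cancel₀ (norm_ne_zero_iff.2 hw), one_smul]
  have := congrFun (h xhat hxhat) (2 * Real.pi * ‖w‖)
  rwa [farField_eq_fourier, farField_eq_fourier, mul_div_cancel_left₀ _ Real.two_pi_pos.ne',
    ← hw] at this

theorem farField_eq_of_phaseless_data {f₁ f₂ : EuclideanSpace ℝ (Fin n) → ℂ}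
    (hf₁ : Integrable f₁) (hcs₁ : HasCompactSupport f₁) (hf₂ : Integrable f₂)
    (hcs₂ : HasCompactSupport f₂) (him₁ : 0 < (∫ y, f₁ y).im) (him₂ : 0 < (∫ y, f₂ y).im)
    {γ : ℝ → ℝ} {a b : ℝ} (hab : a < b) (hγ : ∀ k ∈ Ioo a b, γ k ≠ 0) {τ : ℝ} (hτ : τ ≠ 0)
    {xhat : EuclideanSpace ℝ (Fin n)} {φ : ℝ}
    (hdata : ∀ k ∈ Ioo a b,
      ‖(γ k : ℂ) * farField f₁ xhat k‖ = ‖(γ k : ℂ) * farField f₂ xhat k‖ ∧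
      ‖(γ k : ℂ) * farField f₁ xhat k + τ * cexp (-(I * k * φ))‖ =
        ‖(γ k : ℂ) * farField f₂ xhat k + τ * cexp (-(I * k * φ))‖) :
    farField f₁ xhat = farField f₂ xhat := by
  set A : (EuclideanSpace ℝ (Fin n) → ℂ) → ℂ → ℂ :=
    fun f z ↦ cexp (I * z * φ) * complexFarField f xhat z
  have hA : ∀ f, Integrable f → HasCompactSupport f → Differentiable ℂ (A f) := fun f hf hcs ↦
    ((differentiable_id.const_mul I).mul_const _).cexp.mul
      (differentiable_complexFarField hf hcs xhat)
  have hA_ofReal : ∀ f (k : ℝ), A f k = farField f xhat k * conj (cexp (-(I * k * φ))) := by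
    intro f k
    rw [← exp_conj]
    simp [A, complexFarField_ofReal, mul_comm]
  have hA_zero : ∀ f, A f 0 = ∫ y, f y := fun f ↦ by simp [A, complexFarField_zero]
  have hnorm_re := fun k hk ↦ Complex.norm_eq_and_re_mul_conj_eq_of_norm_add_eq (hγ k hk) hτ
    (hdata k hk).1 (hdata k hk).2
  have hA_eq : A f₁ = A f₂ := (hA f₁ hf₁ hcs₁).eq_of_re_eq_of_norm_eq_on_Ioo (hA f₂ hf₂ hcs₂) hab
    (fun k hk ↦ by simpa only [hA_ofReal] using (hnorm_re k hk).2)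
    (fun k hk ↦ by simp only [hA_ofReal, norm_mul, (hnorm_re k hk).1])
    (by rwa [hA_zero]) (by rwa [hA_zero])
  funext k
  have hk := congrFun hA_eq k
  rw [hA_ofReal, hA_ofReal] at hk
  exact mul_right_cancel₀ (by simp [exp_ne_zero]) hk

end FarField

theorem inverse_source_uniqueness_phaseless_one_reference_point_2D_general
    (kmin kmax : ℝ)
    (f₁ f₂ : EuclideanSpace ℝ (Fin 2) → ℂ)
    (hf₁ : Integrable f₁) (hcs₁ : HasCompactSupport f₁)
    (hf₂ : Integrable f₂) (hcs₂ : HasCompactSupport f₂)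
    (g : ℝ → ℝ)
    (ka kb : ℝ) (hab : ka < kb) (hsub : Set.Ioo ka kb ⊆ Set.Ioo kmin kmax)
    (hgne : ∀ k ∈ Set.Ioo ka kb, g k ≠ 0)
    (him₁ : ∀ᵐ y ∂(volume : Measure (EuclideanSpace ℝ (Fin 2))), 0 ≤ (f₁ y).im)
    (him₂ : ∀ᵐ y ∂(volume : Measure (EuclideanSpace ℝ (Fin 2))), 0 ≤ (f₂ y).im)
    (hpos₁ : 0 < volume {y : EuclideanSpace ℝ (Fin 2) | 0 < (f₁ y).im})
    (hpos₂ : 0 < volume {y : EuclideanSpace ℝ (Fin 2) | 0 < (f₂ y).im})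
    (τ₁ : ℝ) (hτ₁ : τ₁ ≠ 0) (z₀ : EuclideanSpace ℝ (Fin 2))
    (hdata : ∀ xhat : EuclideanSpace ℝ (Fin 2), ‖xhat‖ = 1 →
      ∀ k ∈ Set.Ioo kmin kmax, ∀ τ ∈ ({0, (τ₁ : ℂ)} : Set ℂ),
        ‖(g k : ℂ) * farField f₁ xhat k
            + τ * Complex.exp (-(Complex.I * (k : ℂ) * ((⟪xhat, z₀⟫ : ℝ) : ℂ)))‖
          = ‖(g k : ℂ) * farField f₂ xhat k
            + τ * Complex.exp (-(Complex.I * (k : ℂ) * ((⟪xhat, z₀⟫ : ℝ) : ℂ)))‖) :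
    f₁ =ᵐ[volume] f₂ := by
  refine hf₁.ae_eq_of_fourier_eq hf₂ (fourier_eq_of_farField_eq fun xhat hxhat ↦ ?_)
  refine farField_eq_of_phaseless_data hf₁ hcs₁ hf₂ hcs₂ (integral_im_pos hf₁ him₁ hpos₁)
    (integral_im_pos hf₂ him₂ hpos₂) hab hgne hτ₁ (φ := ⟪xhat, z₀⟫) fun k hk ↦ ?_
  have h := hdata xhat hxhat k (hsub hk)
  exact ⟨by simpa using h 0 (by simp), h τ₁ (by simp)⟩

/-- Uniqueness for the phaseless inverse source problem in `ℝ²` with a single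
reference point source, under the sign condition on the imaginary part of the
source. -/
theorem inverse_source_uniqueness_phaseless_one_reference_point_2D
    (kmin kmax : ℝ) (hk : 0 < kmin) (hkk : kmin < kmax)
    (f₁ f₂ : EuclideanSpace ℝ (Fin 2) → ℂ)
    (hf₁ : Integrable f₁) (hcs₁ : HasCompactSupport f₁)
    (hf₂ : Integrable f₂) (hcs₂ : HasCompactSupport f₂)
    (g : ℝ → ℝ) (hg : ContinuousOn g (Set.Ioo kmin kmax))
    (ka kb : ℝ) (hab : ka < kb) (hsub : Set.Ioo ka kb ⊆ Set.Ioo kmin kmax)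
    (hgne : ∀ k ∈ Set.Ioo ka kb, g k ≠ 0)
    (him₁ : ∀ᵐ y ∂(volume : Measure (EuclideanSpace ℝ (Fin 2))), 0 ≤ (f₁ y).im)
    (him₂ : ∀ᵐ y ∂(volume : Measure (EuclideanSpace ℝ (Fin 2))), 0 ≤ (f₂ y).im)
    (hpos₁ : 0 < volume {y : EuclideanSpace ℝ (Fin 2) | 0 < (f₁ y).im})
    (hpos₂ : 0 < volume {y : EuclideanSpace ℝ (Fin 2) | 0 < (f₂ y).im})
    (τ₁ : ℝ) (hτ₁ : τ₁ ≠ 0) (z₀ : EuclideanSpace ℝ (Fin 2))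
    (hdata : ∀ xhat : EuclideanSpace ℝ (Fin 2), ‖xhat‖ = 1 →
      ∀ k ∈ Set.Ioo kmin kmax, ∀ τ ∈ ({0, (τ₁ : ℂ)} : Set ℂ),
        ‖(g k : ℂ) * farField f₁ xhat k
            + τ * Complex.exp (-(Complex.I * (k : ℂ) * ((⟪xhat, z₀⟫ : ℝ) : ℂ)))‖
          = ‖(g k : ℂ) * farField f₂ xhat k
            + τ * Complex.exp (-(Complex.I * (k : ℂ) * ((⟪xhat, z₀⟫ : ℝ) : ℂ)))‖) :
    f₁ =ᵐ[volume] f₂ :=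
  inverse_source_uniqueness_phaseless_one_reference_point_2D_general kmin kmax f₁ f₂ hf₁ hcs₁ hf₂
    hcs₂ g ka kb hab hsub hgne him₁ him₂ hpos₁ hpos₂ τ₁ hτ₁ z₀ hdata
end
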